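/- Let f be a nonnegative k-submodular function with f(0) = 0, let (e_1,i_1),…,(e_t,i_t) be an LAA run, and let o be a k-set with c(o) ≤ B such that for every e ∈ supp(o) \ supp(x^t) and every i ∈ {1,…,k}, Δ_{(e,i)}f(x^t) ≤ c(e)·f(x^t)/B. Then f(o) ≤ 6·f(x^t). -/

import Mathlib

/-!
Write `O j` for `overlay (x^j) o`, so that `O 0 = o`. The greedy position at `e_j` beats every
position that `O j` may give to `e_j`, so pairwise monotonicity and orthant submodularity bound
the loss of each step by twice its gain: `f (O j) ≤ f (O (j+1)) + 2 (f (x^(j+1)) - f (x^j))`.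
Pairwise monotonicity also makes every gain nonnegative, so `f (x^t) ≥ f 0 = 0`, and telescoping
gives `f o ≤ f (O t) + 2 f (x^t)`. Finally `O t` extends `x^t` by elements of `o`, none of which
passes the density test, so orthant submodularity gives
`f (O t) ≤ f (x^t) + c(o) f (x^t) / B ≤ 2 f (x^t)`. Hence `f o ≤ 4 f (x^t)`.
-/

/-- The meet `x ⊓ y` of two `k`-sets, with components `Xᵢ ∩ Yᵢ`. -/
def sqcap {V : Type*} (x y : V → ℕ) : V → ℕ :=
  fun e => if x e = y e then x e else 0

/-- The join `x ⊔ y` of two `k`-sets, with components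
`Zᵢ = (Xᵢ ∪ Yᵢ) \ ⋃_{j ≠ i} (Xⱼ ∪ Yⱼ)`. -/
def sqcup {V : Type*} (x y : V → ℕ) : V → ℕ :=
  fun e =>
    if x e = 0 then y e
    else if y e = 0 then x e
    else if x e = y e then x e else 0

/-- A `k`-set: every element gets a position in `{0, 1, …, k}`
(`0` meaning unselected). -/
def IsKSet {V : Type*} (k : ℕ) (x : V → ℕ) : Prop := ∀ e, x e ≤ k

/-- `x ⊑ y`: every component of `x` is contained in the corresponding
component of `y`. -/
def KLE {V : Type*} (x y : V → ℕ) : Prop := ∀ e, x e ≠ 0 → y e = x e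

/-- The singleton `k`-set `(e, i)`. -/
def singl {V : Type*} [DecidableEq V] (e : V) (i : ℕ) : V → ℕ :=
  fun e' => if e' = e then i else 0

/-- `k`-submodularity: `f x + f y ≥ f (x ⊓ y) + f (x ⊔ y)` for all `k`-sets. -/
def KSubmodular {V : Type*} (k : ℕ) (f : (V → ℕ) → ℝ) : Prop :=
  ∀ x y : V → ℕ, IsKSet k x → IsKSet k y →
    f x + f y ≥ f (sqcap x y) + f (sqcup x y)

/-- The marginal gain `Δ_{(e,i)} f(x) = f (x ⊔ (e,i)) - f x`. -/
def marg {V : Type*} [DecidableEq V] (f : (V → ℕ) → ℝ) (e : V) (i : ℕ)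
    (x : V → ℕ) : ℝ :=
  f (sqcup x (singl e i)) - f x

/-- The cost of a `k`-set: the total cost of its support. -/
noncomputable def cost {V : Type*} [Fintype V] (c : V → ℝ) (x : V → ℕ) : ℝ :=
  ∑ e ∈ Finset.univ.filter (fun e => x e ≠ 0), c e

open Function

theorem le_of_forall_lt_le_succ {α : Type*} [Preorder α] {g : ℕ → α} {t : ℕ}
    (h : ∀ j < t, g j ≤ g (j + 1)) : g 0 ≤ g t := by
  induction t with
  | zero => exact le_rfl
  | succ n ih => exact (ih fun j hj => h j (hj.trans n.lt_succ_self)).trans (h n n.lt_succ_self)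

section KSet

variable {V : Type*} {k : ℕ}

theorem KLE.apply_eq_zero {x y : V → ℕ} (hxy : KLE x y) {e : V} (hye : y e = 0) : x e = 0 := by
  by_contra h
  exact h ((hxy e h).symm.trans hye)

variable [DecidableEq V]

theorem sqcup_singl_of_eq_zero {x : V → ℕ} {e : V} (hx : x e = 0) (i : ℕ) :
    sqcup x (singl e i) = update x e i := by
  funext v
  by_cases h : v = e
  · subst h; simp [sqcup, singl, hx]
  · by_cases hz : x v = 0 <;> simp [sqcup, singl, h, hz]

theorem IsKSet.update {x : V → ℕ} (hx : IsKSet k x) (e : V) {i : ℕ} (hik : i ≤ k) :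
    IsKSet k (update x e i) := by
  intro v
  by_cases h : v = e
  · subst h; simpa using hik
  · rw [update_of_ne h]; exact hx v

theorem KLE.update_zero {x y : V → ℕ} (hxy : KLE x y) {e : V} (hxe : x e = 0) :
    KLE x (update y e 0) := by
  intro v hv
  rw [update_of_ne (by rintro rfl; exact hv hxe)]
  exact hxy v hv

theorem KSubmodular.pairwise_monotone {f : (V → ℕ) → ℝ} (hsub : KSubmodular k f)
    {y : V → ℕ} (hy : IsKSet k y) {e : V} (hye : y e = 0)
    {i j : ℕ} (hi0 : i ≠ 0) (hik : i ≤ k) (hj0 : j ≠ 0) (hjk : j ≤ k) (hij : i ≠ j) :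
    f y + f y ≤ f (update y e i) + f (update y e j) := by
  have h := hsub _ _ (hy.update e hik) (hy.update e hjk)
  have hcap : sqcap (update y e i) (update y e j) = y := by
    funext v
    by_cases hv : v = e
    · subst hv; simp [sqcap, hij, hye]
    · simp [sqcap, update_of_ne hv]
  have hcup : sqcup (update y e i) (update y e j) = y := by
    funext v
    by_cases hv : v = e
    · subst hv; simp [sqcup, hi0, hj0, hij, hye]
    · by_cases hz : y v = 0 <;> simp [sqcup, update_of_ne hv, hz]
  rw [hcap, hcup] at h
  linarith

theorem KSubmodular.orthant_submodular {f : (V → ℕ) → ℝ} (hsub : KSubmodular k f)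
    {x y : V → ℕ} (hx : IsKSet k x) (hy : IsKSet k y) (hxy : KLE x y)
    {e : V} (hye : y e = 0) {i : ℕ} (hik : i ≤ k) :
    f (update y e i) - f y ≤ f (update x e i) - f x := by
  have hxe := hxy.apply_eq_zero hye
  rcases eq_or_ne i 0 with rfl | hi0
  · rw [update_eq_self_iff.mpr hye.symm, update_eq_self_iff.mpr hxe.symm, sub_self, sub_self]
  have h := hsub _ _ (hx.update e hik) hy
  have hcap : sqcap (update x e i) y = x := by
    funext v
    by_cases hv : v = e
    · subst hv; simp [sqcap, hye, hi0, hxe]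
    · by_cases hz : x v = 0
      · by_cases hz' : y v = 0 <;> simp [sqcap, update_of_ne hv, hz, hz']
      · simp [sqcap, update_of_ne hv, hxy v hz]
  have hcup : sqcup (update x e i) y = update y e i := by
    funext v
    by_cases hv : v = e
    · subst hv; simp [sqcup, hye, hi0]
    · by_cases hz : x v = 0
      · simp [sqcup, update_of_ne hv, hz]
      · simp [sqcup, update_of_ne hv, hz, hxy v hz]
  rw [hcap, hcup] at h
  linarith

end KSet

section Greedy

variable {V : Type*} [DecidableEq V] {k : ℕ} {f : (V → ℕ) → ℝ} {y : V → ℕ} {e : V} {p : ℕ}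

def IsBestPosition (f : (V → ℕ) → ℝ) (k : ℕ) (y : V → ℕ) (e : V) (p : ℕ) : Prop :=
  ∀ l, 1 ≤ l → l ≤ k → f (update y e l) ≤ f (update y e p)

theorem exists_ne_zero_le_ne (hk : 2 ≤ k) (p : ℕ) : ∃ l, l ≠ 0 ∧ l ≤ k ∧ l ≠ p := by
  by_cases hp : p = 1
  · exact ⟨2, by omega, hk, by omega⟩
  · exact ⟨1, by omega, by omega, Ne.symm hp⟩

theorem KSubmodular.le_update_of_isBestPosition (hsub : KSubmodular k f) (hk : 2 ≤ k)
    (hy : IsKSet k y) (hye : y e = 0) (hp0 : p ≠ 0) (hpk : p ≤ k)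
    (hbest : IsBestPosition f k y e p) : f y ≤ f (update y e p) := by
  obtain ⟨l, hl0, hlk, hlp⟩ := exists_ne_zero_le_ne hk p
  have hpair := hsub.pairwise_monotone hy hye hp0 hpk hl0 hlk hlp.symm
  have hl := hbest l (Nat.one_le_iff_ne_zero.mpr hl0) hlk
  linarith

theorem KSubmodular.marginal_le_of_isBestPosition (hsub : KSubmodular k f) (hk : 2 ≤ k)
    (hy : IsKSet k y) (hye : y e = 0) (hp0 : p ≠ 0) (hpk : p ≤ k)
    (hbest : IsBestPosition f k y e p) {z : V → ℕ} (hz : IsKSet k z) (hyz : KLE y z)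
    (hze : z e = 0) {q : ℕ} (hqk : q ≤ k) :
    f (update z e q) - f z ≤ f (update y e p) - f y := by
  refine (hsub.orthant_submodular hy hz hyz hze hqk).trans ?_
  rcases eq_or_ne q 0 with rfl | hq0
  · rw [update_eq_self_iff.mpr hye.symm, sub_self, sub_nonneg]
    exact hsub.le_update_of_isBestPosition hk hy hye hp0 hpk hbest
  · exact sub_le_sub_right (hbest q (Nat.one_le_iff_ne_zero.mpr hq0) hqk) _

/-- Erase `e` from `z`, then put it back at `p`: by orthant submodularity and pairwise
monotonicity each move costs at most the gain of `p` at `y`. -/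
theorem KSubmodular.le_update_add_two_mul_of_isBestPosition (hsub : KSubmodular k f)
    (hk : 2 ≤ k) (hy : IsKSet k y) (hye : y e = 0) (hp0 : p ≠ 0) (hpk : p ≤ k)
    (hbest : IsBestPosition f k y e p) {z : V → ℕ} (hz : IsKSet k z) (hyz : KLE y z) :
    f z ≤ f (update z e p) + 2 * (f (update y e p) - f y) := by
  set z₀ := update z e 0
  have hz₀ : IsKSet k z₀ := hz.update e (Nat.zero_le k)
  have hyz₀ : KLE y z₀ := hyz.update_zero hye
  have hz₀e : z₀ e = 0 := update_self e 0 z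
  have hmarg {q : ℕ} (hq : q ≤ k) :=
    hsub.marginal_le_of_isBestPosition hk hy hye hp0 hpk hbest hz₀ hyz₀ hz₀e hq
  obtain ⟨l, hl0, hlk, hlp⟩ := exists_ne_zero_le_ne hk p
  have hpair := hsub.pairwise_monotone hz₀ hz₀e hp0 hpk hl0 hlk hlp.symm
  have herase := hmarg (hz e)
  have hl := hmarg hlk
  rw [update_idem, update_eq_self] at herase
  rw [show update z e p = update z₀ e p from (update_idem _ _ _).symm]
  linarith

end Greedy

section Overlay

variable {V : Type*} {k : ℕ}

/-- The paper's `(o ⊔ y) ⊔ y`, written `o^j` when `y = x^j`. -/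
def overlay (y o : V → ℕ) : V → ℕ := fun v => if y v = 0 then o v else y v

theorem overlay_zero (o : V → ℕ) : overlay (fun _ => 0) o = o := rfl

theorem kle_overlay (y o : V → ℕ) : KLE y (overlay y o) := fun _ hv => if_neg hv

theorem IsKSet.overlay {y o : V → ℕ} (hy : IsKSet k y) (ho : IsKSet k o) :
    IsKSet k (overlay y o) := by
  intro v
  unfold _root_.overlay
  split_ifs
  exacts [ho v, hy v]

variable [DecidableEq V]

theorem overlay_update (y o : V → ℕ) (e : V) {p : ℕ} (hp0 : p ≠ 0) :
    overlay (update y e p) o = update (overlay y o) e p := by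
  funext v
  by_cases hv : v = e
  · subst hv; simp [overlay, hp0]
  · simp [overlay, update_of_ne hv]

theorem overlay_eq_piecewise [Fintype V] (y o : V → ℕ) :
    overlay y o = (Finset.univ.filter fun v => o v ≠ 0 ∧ y v = 0).piecewise o y := by
  funext v
  by_cases hy : y v = 0
  · by_cases ho : o v = 0 <;> simp [overlay, Finset.piecewise, hy, ho]
  · simp [overlay, Finset.piecewise, hy]

theorem KSubmodular.piecewise_sub_le_sum {f : (V → ℕ) → ℝ} (hsub : KSubmodular k f)
    {y o : V → ℕ} (hy : IsKSet k y) (ho : IsKSet k o) {s : Finset V} (hs : ∀ a ∈ s, y a = 0) :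
    f (s.piecewise o y) - f y ≤ ∑ a ∈ s, (f (update y a (o a)) - f y) := by
  induction s using Finset.induction_on with
  | empty => simp
  | @insert a s ha ih =>
    have hs' : ∀ b ∈ s, y b = 0 := fun b hb => hs b (Finset.mem_insert_of_mem hb)
    have hys : KLE y (s.piecewise o y) := fun v hv => by
      rw [Finset.piecewise_eq_of_notMem _ _ _ fun hvs => hv (hs' v hvs)]
    have hsk : IsKSet k (s.piecewise o y) := fun v => by
      by_cases hv : v ∈ s
      · rw [Finset.piecewise_eq_of_mem _ _ _ hv]; exact ho v
      · rw [Finset.piecewise_eq_of_notMem _ _ _ hv]; exact hy v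
    have hsa : s.piecewise o y a = 0 := by
      rw [Finset.piecewise_eq_of_notMem _ _ _ ha]; exact hs a (Finset.mem_insert_self a s)
    have hstep := hsub.orthant_submodular hy hsk hys hsa (ho a)
    rw [Finset.piecewise_insert, Finset.sum_insert ha]
    linarith [ih hs']

theorem KSubmodular.overlay_le_add_cost_mul [Fintype V] {f : (V → ℕ) → ℝ}
    (hsub : KSubmodular k f) {y o : V → ℕ} (hy : IsKSet k y) (ho : IsKSet k o)
    {c : V → ℝ} (hc : ∀ v, 0 ≤ c v) {r : ℝ} (hr : 0 ≤ r)
    (hsat : ∀ a, o a ≠ 0 → y a = 0 → f (update y a (o a)) - f y ≤ c a * r) :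
    f (overlay y o) ≤ f y + cost c o * r := by
  set S := Finset.univ.filter fun v => o v ≠ 0 ∧ y v = 0
  have hS : ∀ a ∈ S, o a ≠ 0 ∧ y a = 0 := fun a ha => (Finset.mem_filter.mp ha).2
  have hsum := hsub.piecewise_sub_le_sum hy ho fun a ha => (hS a ha).2
  have hmarg : ∑ a ∈ S, (f (update y a (o a)) - f y) ≤ ∑ a ∈ S, c a * r :=
    Finset.sum_le_sum fun a ha => hsat a (hS a ha).1 (hS a ha).2
  have hcost : ∑ a ∈ S, c a ≤ cost c o :=
    Finset.sum_le_sum_of_subset_of_nonneg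
      (fun a ha => Finset.mem_filter.mpr ⟨Finset.mem_univ a, (hS a ha).1⟩)
      fun a _ _ => hc a
  calc f (overlay y o) = f (S.piecewise o y) := by rw [overlay_eq_piecewise]
    _ ≤ f y + (∑ a ∈ S, c a) * r := by rw [Finset.sum_mul]; linarith
    _ ≤ f y + cost c o * r := by gcongr

end Overlay

section Run

variable {V : Type*} [DecidableEq V] {t : ℕ} {e : ℕ → V} {pos : ℕ → ℕ} {x : ℕ → V → ℕ}

theorem run_support (hx0 : x 0 = fun _ => 0)
    (hxsucc : ∀ j < t, x (j + 1) = sqcup (x j) (singl (e j) (pos j))) :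
    ∀ j ≤ t, ∀ v, x j v ≠ 0 → ∃ r < j, v = e r := by
  intro j
  induction j with
  | zero => intro _ v hv; simp [hx0] at hv
  | succ n ih =>
    intro hn v hv
    rw [hxsucc n hn] at hv
    by_cases hve : v = e n
    · exact ⟨n, n.lt_succ_self, hve⟩
    · by_cases hz : x n v = 0
      · simp [sqcup, singl, hve, hz] at hv
      · obtain ⟨r, hr, rfl⟩ := ih (Nat.le_of_succ_le hn) v hz
        exact ⟨r, hr.trans n.lt_succ_self, rfl⟩

theorem run_apply_eq_zero (hx0 : x 0 = fun _ => 0)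
    (hxsucc : ∀ j < t, x (j + 1) = sqcup (x j) (singl (e j) (pos j)))
    (hdist : ∀ j₁ j₂, j₁ < t → j₂ < t → e j₁ = e j₂ → j₁ = j₂) {j : ℕ} (hj : j < t) :
    x j (e j) = 0 := by
  by_contra h
  obtain ⟨r, hr, hre⟩ := run_support hx0 hxsucc j hj.le (e j) h
  exact hr.ne (hdist j r hj (hr.trans hj) hre).symm

theorem run_isKSet {k : ℕ} (hx0 : x 0 = fun _ => 0)
    (hupd : ∀ j < t, x (j + 1) = update (x j) (e j) (pos j)) (hposk : ∀ j < t, pos j ≤ k) :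
    ∀ j ≤ t, IsKSet k (x j) := by
  intro j
  induction j with
  | zero => intro _ v; simp [hx0]
  | succ n ih => intro hn; rw [hupd n hn]; exact (ih (Nat.le_of_succ_le hn)).update _ (hposk n hn)

end Run

theorem stmt3_general {V : Type*} [Fintype V] [DecidableEq V]
    (k : ℕ) (hk : 2 ≤ k)
    (f : (V → ℕ) → ℝ)
    (hsub : KSubmodular k f)
    (hf0 : f (fun _ => 0) = 0)
    (c : V → ℝ) (hc : ∀ e, 0 < c e) (B : ℝ) (hB : 0 < B)
    (t : ℕ) (e : ℕ → V) (pos : ℕ → ℕ)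
    (hdist : ∀ j₁ j₂, j₁ < t → j₂ < t → e j₁ = e j₂ → j₁ = j₂)
    (hposk : ∀ j < t, 1 ≤ pos j ∧ pos j ≤ k)
    (x : ℕ → (V → ℕ))
    (hx0 : x 0 = fun _ => 0)
    (hxsucc : ∀ j < t, x (j + 1) = sqcup (x j) (singl (e j) (pos j)))
    (hbest : ∀ j < t, ∀ l, 1 ≤ l → l ≤ k →
      f (sqcup (x j) (singl (e j) l)) ≤ f (sqcup (x j) (singl (e j) (pos j))))
    (o : V → ℕ) (ho : IsKSet k o) (hoB : cost c o ≤ B)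
    (hsat : ∀ e', o e' ≠ 0 → x t e' = 0 → ∀ i, 1 ≤ i → i ≤ k →
      marg f e' i (x t) ≤ c e' * f (x t) / B) :
    f o ≤ 6 * f (x t) := by
  have hfresh {j : ℕ} (hj : j < t) := run_apply_eq_zero hx0 hxsucc hdist hj
  have hupd : ∀ j < t, x (j + 1) = update (x j) (e j) (pos j) := fun j hj => by
    rw [hxsucc j hj, sqcup_singl_of_eq_zero (hfresh hj)]
  have hxk := run_isKSet hx0 hupd fun j hj => (hposk j hj).2
  have hp0 {j : ℕ} (hj : j < t) : pos j ≠ 0 := Nat.one_le_iff_ne_zero.mp (hposk j hj).1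
  have hbest' {j : ℕ} (hj : j < t) : IsBestPosition f k (x j) (e j) (pos j) := fun l hl hlk => by
    simpa only [sqcup_singl_of_eq_zero (hfresh hj)] using hbest j hj l hl hlk
  have hgrow : f (x 0) ≤ f (x t) := le_of_forall_lt_le_succ (g := fun j => f (x j)) fun j hj => by
    rw [hupd j hj]
    exact hsub.le_update_of_isBestPosition hk (hxk j hj.le) (hfresh hj) (hp0 hj) (hposk j hj).2
      (hbest' hj)
  have hloss : f (overlay (x 0) o) + 2 * f (x 0) ≤ f (overlay (x t) o) + 2 * f (x t) :=
    le_of_forall_lt_le_succ (g := fun j => f (overlay (x j) o) + 2 * f (x j)) fun j hj => by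
      have := hsub.le_update_add_two_mul_of_isBestPosition hk (hxk j hj.le) (hfresh hj)
        (hp0 hj) (hposk j hj).2 (hbest' hj) ((hxk j hj.le).overlay ho) (kle_overlay _ o)
      simp only [hupd j hj, overlay_update _ _ _ (hp0 hj)]
      linarith
  rw [hx0, overlay_zero, hf0] at hloss
  rw [hx0, hf0] at hgrow
  have hend := hsub.overlay_le_add_cost_mul (hxk t le_rfl) ho (fun v => (hc v).le)
    (div_nonneg hgrow hB.le) fun a hoa hxa => by
      simpa only [marg, sqcup_singl_of_eq_zero hxa, mul_div_assoc]
        using hsat a hoa hxa (o a) (Nat.one_le_iff_ne_zero.mpr hoa) (ho a)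
  have hcost : cost c o * (f (x t) / B) ≤ f (x t) :=
    calc _ ≤ B * (f (x t) / B) := by gcongr
      _ = f (x t) := mul_div_cancel₀ _ hB.ne'
  linarith

/-- if no remaining element of `o` passes the density test at the
end of the LAA run, then `f(o) ≤ 6 f(x^t)`. -/
theorem stmt3 {V : Type*} [Fintype V] [DecidableEq V]
    (k : ℕ) (hk : 2 ≤ k)
    (f : (V → ℕ) → ℝ)
    (hsub : KSubmodular k f)
    (hnn : ∀ x : V → ℕ, IsKSet k x → 0 ≤ f x)
    (hf0 : f (fun _ => 0) = 0)
    (c : V → ℝ) (hc : ∀ e, 0 < c e) (B : ℝ) (hB : 0 < B)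
    (t : ℕ) (e : ℕ → V) (pos : ℕ → ℕ)
    (hdist : ∀ j₁ j₂, j₁ < t → j₂ < t → e j₁ = e j₂ → j₁ = j₂)
    (hposk : ∀ j < t, 1 ≤ pos j ∧ pos j ≤ k)
    (x : ℕ → (V → ℕ))
    (hx0 : x 0 = fun _ => 0)
    (hxsucc : ∀ j < t, x (j + 1) = sqcup (x j) (singl (e j) (pos j)))
    (hbest : ∀ j < t, ∀ l, 1 ≤ l → l ≤ k →
      f (sqcup (x j) (singl (e j) l)) ≤ f (sqcup (x j) (singl (e j) (pos j))))
    (hgain : ∀ j < t, c (e j) * f (x j) / B ≤ marg f (e j) (pos j) (x j))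
    (hlight : ∀ j < t, c (e j) ≤ B / 2)
    (o : V → ℕ) (ho : IsKSet k o) (hoB : cost c o ≤ B)
    (hsat : ∀ e', o e' ≠ 0 → x t e' = 0 → ∀ i, 1 ≤ i → i ≤ k →
      marg f e' i (x t) ≤ c e' * f (x t) / B) :
    f o ≤ 6 * f (x t) :=
  stmt3_general k hk f hsub hf0 c hc B hB t e pos hdist hposk x hx0 hxsucc hbest o ho hoB hsat
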